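/- For the INMA(q1,q2) random field under the spread model, i.e., when β_• ≤ 1 and each vector Z_{s,t;r} is multinomially distributed as MULT(1; β_{00},…,β_{q1q2}) (so at most one component of Z_{s,t;r} equals 1, with P(Z_{s,t;r}^{(i,j)} = 1) = β_{ij}), the autocovariance function satisfies, for every lag (k,l) ≠ (0,0) with 0 ≤ k ≤ q1 and 0 ≤ l ≤ q2, γ(k,l) := Cov(X_{s,t}, X_{s−k,t−l}) = (σ_ε² − μ_ε) · ∑_{i=k}^{q1} ∑_{j=l}^{q2} β_{i,j} β_{i−k,j−l}. (Example: spread model.) -/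

import Mathlib

/-!
Write `X_{s,t} = ∑_{(i,j)} β_{ij} ∘ ε_{s-i,t-j}`; by bilinearity `γ(k,l)` is the sum of the
covariances of pairs of summands. Summands built on different innovations are independent,
since the innovation and counting series of one site are independent of those of any other
site. The summands `β_{ij} ∘ ε_p` and `β_{i'j'} ∘ ε_p` share an innovation exactly when
`(i,j) = (k,l) + (i',j')`, and then `(i,j) ≠ (i',j')`. In the spread model no `Z_{p;r}` has two
nonzero components, so conditionally on `ε_p = n` the product of the two thinnings has mean
`n (n - 1) β_{ij} β_{i'j'}`. Hence their covariance is
`(E ε_p² - E ε_p) β_{ij} β_{i'j'} - (E ε_p)² β_{ij} β_{i'j'} = (σ_ε² - μ_ε) β_{ij} β_{i'j'}`.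
-/

open MeasureTheory ProbabilityTheory Finset

lemma sum_range_sum_range_ite_eq_zero (n : ℕ) (c : ℝ) :
    ∑ r ∈ range n, ∑ r' ∈ range n, (if r = r' then 0 else c) = ((n : ℝ) ^ 2 - n) * c := by
  have h (r r' : ℕ) : (if r = r' then 0 else c) = c - if r = r' then c else 0 := by
    split_ifs <;> ring
  simp only [h, sum_sub_distrib, sum_ite_eq, sum_ite_mem, inter_self, sum_const, card_range,
    nsmul_eq_mul]
  ring

lemma sum_product_range_sum_ite_eq_add {M : Type*} [AddCommMonoid M] (q1 q2 k l : ℕ)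
    (f : ℕ × ℕ → ℕ × ℕ → M) :
    ∑ c ∈ range (q1 + 1) ×ˢ range (q2 + 1), ∑ c' ∈ range (q1 + 1) ×ˢ range (q2 + 1),
        (if c = (k, l) + c' then f c c' else 0)
      = ∑ i ∈ Icc k q1, ∑ j ∈ Icc l q2, f (i, j) (i - k, j - l) := by
  rw [sum_comm]
  simp only [sum_ite_eq']
  rw [← sum_filter, ← sum_product' (f := fun i j => f (i, j) (i - k, j - l))]
  refine sum_nbij' (fun c' => (k, l) + c') (fun c => c - (k, l)) ?_ ?_ ?_ ?_ (by simp)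
  all_goals
    rintro ⟨a, b⟩ h
    simp only [mem_filter, mem_product, mem_range, mem_Icc, Prod.mk_add_mk, Prod.mk_sub_mk,
      Prod.mk.injEq] at h ⊢
    omega

lemma mk_sub_natCast_eq_iff (s t : ℤ) (k l : ℕ) (c c' : ℕ × ℕ) :
    ((s - c.1, t - c.2) : ℤ × ℤ) = (s - k - c'.1, t - l - c'.2) ↔ c = (k, l) + c' := by
  obtain ⟨a, b⟩ := c
  obtain ⟨a', b'⟩ := c'
  simp only [Prod.mk.injEq, Prod.mk_add_mk]
  omega

namespace ProbabilityTheory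

variable {Ω : Type*} {mΩ : MeasurableSpace Ω} {P : Measure Ω}

lemma iIndep.sumElim {ι κ : Type*} {m₁ : ι → MeasurableSpace Ω} {m₂ : κ → MeasurableSpace Ω}
    (h₁ : iIndep m₁ P) (h₂ : iIndep m₂ P) (h : Indep (⨆ i, m₁ i) (⨆ j, m₂ j) P) :
    iIndep (Sum.elim m₁ m₂) P := by
  classical
  rw [iIndep_iff] at h₁ h₂ ⊢
  intro S sets hsets
  have hsplit : ⋂ x ∈ S, sets x
      = (⋂ i ∈ S.toLeft, sets (.inl i)) ∩ ⋂ j ∈ S.toRight, sets (.inr j) := by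
    ext ω
    simp only [Set.mem_iInter, Set.mem_inter_iff, mem_toLeft, mem_toRight]
    exact ⟨fun H => ⟨fun i hi => H _ hi, fun j hj => H _ hj⟩,
      fun ⟨H₁, H₂⟩ x => x.rec H₁ H₂⟩
  have hleft : MeasurableSet[⨆ i, m₁ i] (⋂ i ∈ S.toLeft, sets (.inl i)) :=
    .biInter S.toLeft.countable_toSet fun i hi =>
      le_iSup m₁ i _ (hsets _ (mem_toLeft.1 hi))
  have hright : MeasurableSet[⨆ j, m₂ j] (⋂ j ∈ S.toRight, sets (.inr j)) :=
    .biInter S.toRight.countable_toSet fun j hj =>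
      le_iSup m₂ j _ (hsets _ (mem_toRight.1 hj))
  rw [hsplit, (Indep_iff _ _ _).1 h _ _ hleft hright,
    h₁ _ fun i hi => hsets _ (mem_toLeft.1 hi), h₂ _ fun j hj => hsets _ (mem_toRight.1 hj),
    prod_sum_eq_prod_toLeft_mul_prod_toRight]

lemma indepFun_block_of_ne {ι κ α β : Type*} [MeasurableSpace α] [MeasurableSpace β]
    {f : ι → Ω → α} {g : ι × κ → Ω → β} (hfm : ∀ i, Measurable (f i))
    (hgm : ∀ j, Measurable (g j)) (hf : iIndepFun f P) (hg : iIndepFun g P)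
    (hfg : IndepFun (fun ω i => f i ω) (fun ω j => g j ω) P) {i i' : ι} (hii' : i ≠ i') :
    IndepFun (fun ω => (f i ω, fun k => g (i, k) ω))
      (fun ω => (f i' ω, fun k => g (i', k) ω)) P := by
  set m : ι ⊕ ι × κ → MeasurableSpace Ω :=
    Sum.elim (fun i => .comap (f i) inferInstance) (fun j => .comap (g j) inferInstance)
  have hm : iIndep m P := by
    refine hf.iIndep.sumElim hg.iIndep ?_
    rw [← MeasurableSpace.comap_process_pi, ← MeasurableSpace.comap_process_pi]
    exact hfg
  have hm_le : ∀ x, m x ≤ mΩ :=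
    fun x => x.rec (fun i => (hfm i).comap_le) (fun j => (hgm j).comap_le)
  let block : ι → Set (ι ⊕ ι × κ) := fun i => {x | x.elim (· = i) (·.1 = i)}
  have hblock : Disjoint (block i) (block i') := by
    rw [Set.disjoint_left]
    rintro (a | a) h h' <;> exact hii' (h.symm.trans h')
  have hmeas : ∀ a,
      Measurable[⨆ x ∈ block a, m x] (fun ω => (f a ω, fun k => g (a, k) ω)) := by
    intro a
    refine .prodMk (Measurable.of_comap_le (le_biSup m (show Sum.inl a ∈ block a from rfl))) ?_
    refine @measurable_pi_lambda _ _ _ (⨆ x ∈ block a, m x) _ _ fun k => ?_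
    exact Measurable.of_comap_le (le_biSup m (show Sum.inr (a, k) ∈ block a from rfl))
  exact indep_of_indep_of_le_right (indep_of_indep_of_le_left
    (indep_iSup_of_disjoint hm_le hm hblock) (hmeas i).comap_le) (hmeas i').comap_le

lemma IndepFun.integral_comp_eq_integral_integral [IsFiniteMeasure P]
    {α β : Type*} [MeasurableSpace α] [MeasurableSpace β]
    {X : Ω → α} {Y : Ω → β} (hXY : IndepFun X Y P) (hX : AEMeasurable X P)
    (hY : AEMeasurable Y P) {g : α → β → ℝ} (hg : Measurable (Function.uncurry g))
    (hint : Integrable (fun ω => g (X ω) (Y ω)) P) :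
    ∫ ω, g (X ω) (Y ω) ∂P = ∫ ω, (∫ ω', g (X ω) (Y ω') ∂P) ∂P := by
  have hlaw := hXY.map_prod_eq_prod_map_map hX hY
  have hint' : Integrable (Function.uncurry g) ((P.map X).prod (P.map Y)) := by
    rw [← hlaw]
    exact (integrable_map_measure hg.aestronglyMeasurable (hX.prodMk hY)).2 hint
  have hinner : ∀ x, ∫ y, g x y ∂(P.map Y) = ∫ ω', g x (Y ω') ∂P := fun x =>
    integral_map hY (hg.of_uncurry_left).aestronglyMeasurable
  calc ∫ ω, g (X ω) (Y ω) ∂P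
      = ∫ z, Function.uncurry g z ∂(P.map fun ω => (X ω, Y ω)) :=
        (integral_map (hX.prodMk hY) hg.aestronglyMeasurable).symm
    _ = ∫ x, ∫ y, g x y ∂(P.map Y) ∂(P.map X) := by rw [hlaw, integral_prod _ hint']; rfl
    _ = ∫ ω, (∫ ω', g (X ω) (Y ω') ∂P) ∂P := by
        simp_rw [← hinner]
        exact integral_map hX hg.stronglyMeasurable.integral_prod_right'.aestronglyMeasurable

lemma integral_natCast_eq_measureReal_of_le_one {W : Ω → ℕ} (hW : Measurable W)
    (h1 : ∀ ω, W ω ≤ 1) : ∫ ω, (W ω : ℝ) ∂P = P.real {ω | W ω = 1} := by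
  have hind : (fun ω => (W ω : ℝ)) = {ω | W ω = 1}.indicator 1 := funext fun ω => by
    rcases Nat.le_one_iff_eq_zero_or_eq_one.1 (h1 ω) with h | h <;> simp [h]
  rw [hind]
  exact integral_indicator_one (hW (measurableSet_singleton 1))

lemma measurable_sum_range {N : Ω → ℕ} {Y : ℕ → Ω → ℝ} (hN : Measurable N)
    (hY : ∀ r, Measurable (Y r)) : Measurable fun ω => ∑ r ∈ range (N ω), Y r ω := by
  have hg : Measurable (Function.uncurry fun (n : ℕ) (y : ℕ → ℝ) => ∑ r ∈ range n, y r) :=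
    measurable_from_prod_countable_right fun n => by
      simp only [Function.uncurry_apply_pair]; fun_prop
  exact hg.comp (hN.prodMk (measurable_pi_lambda _ hY))

lemma memLp_sum_range_of_abs_le_one {p : ENNReal} {N : Ω → ℕ} {Y : ℕ → Ω → ℝ}
    (hN : Measurable N) (hNp : MemLp (fun ω => (N ω : ℝ)) p P) (hY : ∀ r, Measurable (Y r))
    (hY1 : ∀ r ω, |Y r ω| ≤ 1) : MemLp (fun ω => ∑ r ∈ range (N ω), Y r ω) p P := by
  refine hNp.of_le (measurable_sum_range hN hY).aestronglyMeasurable (ae_of_all _ fun ω => ?_)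
  simp only [Real.norm_eq_abs, Nat.abs_cast]
  calc |∑ r ∈ range (N ω), Y r ω| ≤ ∑ r ∈ range (N ω), |Y r ω| := abs_sum_le_sum_abs _ _
    _ ≤ ∑ r ∈ range (N ω), 1 := sum_le_sum fun r _ => hY1 r ω
    _ = N ω := by simp

lemma integral_sum_range_mul_sum_range {Y Y' : ℕ → Ω → ℝ} (hY : ∀ r, Integrable (Y r) P)
    (hY' : ∀ r, Integrable (Y' r) P) (hYY' : ∀ r r', r ≠ r' → IndepFun (Y r) (Y' r') P)
    (hdisj : ∀ r, Y r * Y' r =ᵐ[P] 0) {a b : ℝ} (ha : ∀ r, ∫ ω, Y r ω ∂P = a)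
    (hb : ∀ r, ∫ ω, Y' r ω ∂P = b) (n : ℕ) :
    ∫ ω, (∑ r ∈ range n, Y r ω) * (∑ r ∈ range n, Y' r ω) ∂P
      = ((n : ℝ) ^ 2 - n) * (a * b) := by
  have hint : ∀ r r', Integrable (fun ω => Y r ω * Y' r' ω) P := by
    intro r r'
    rcases eq_or_ne r r' with rfl | hrr'
    · exact (integrable_zero _ _ _).congr (hdisj r).symm
    · exact (hYY' r r' hrr').integrable_mul (hY r) (hY' r')
  have hterm : ∀ r r', ∫ ω, Y r ω * Y' r' ω ∂P = if r = r' then 0 else a * b := by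
    intro r r'
    split_ifs with hrr'
    · subst hrr'
      exact (integral_congr_ae (hdisj r)).trans (integral_zero _ _)
    · rw [(hYY' r r' hrr').integral_fun_mul_eq_mul_integral (hY r).1 (hY' r').1, ha, hb]
  simp_rw [sum_mul_sum]
  rw [integral_finsetSum _ fun r _ => integrable_finsetSum _ fun r' _ => hint r r']
  simp_rw [integral_finsetSum _ fun r' _ => hint _ r', hterm]
  exact sum_range_sum_range_ite_eq_zero n (a * b)

lemma integral_sum_range_of_indepFun [IsFiniteMeasure P] {N : Ω → ℕ} {Y : ℕ → Ω → ℝ}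
    (hN : Measurable N) (hNint : Integrable (fun ω => (N ω : ℝ)) P) (hY : ∀ r, Measurable (Y r))
    (hY1 : ∀ r ω, |Y r ω| ≤ 1) (hNY : IndepFun N (fun ω r => Y r ω) P) {a : ℝ}
    (ha : ∀ r, ∫ ω, Y r ω ∂P = a) :
    ∫ ω, ∑ r ∈ range (N ω), Y r ω ∂P = (∫ ω, (N ω : ℝ) ∂P) * a := by
  have hYint : ∀ r, Integrable (Y r) P := fun r =>
    .of_bound (hY r).aestronglyMeasurable 1 (ae_of_all _ fun ω => hY1 r ω)
  rw [hNY.integral_comp_eq_integral_integral (g := fun n y => ∑ r ∈ range n, y r)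
    hN.aemeasurable (measurable_pi_lambda _ hY).aemeasurable ?_ ?_]
  · simp_rw [integral_finsetSum _ fun r _ => hYint r, ha, sum_const, card_range, nsmul_eq_mul]
    exact integral_mul_const a _
  · exact measurable_sum_range measurable_fst fun r => by fun_prop
  · exact memLp_one_iff_integrable.1
      (memLp_sum_range_of_abs_le_one hN (memLp_one_iff_integrable.2 hNint) hY hY1)

lemma integral_sum_range_mul_sum_range_of_indepFun [IsFiniteMeasure P]
    {N : Ω → ℕ} {Y Y' : ℕ → Ω → ℝ}
    (hN : Measurable N) (hN2 : MemLp (fun ω => (N ω : ℝ)) 2 P)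
    (hY : ∀ r, Measurable (Y r)) (hY' : ∀ r, Measurable (Y' r))
    (hY1 : ∀ r ω, |Y r ω| ≤ 1) (hY'1 : ∀ r ω, |Y' r ω| ≤ 1)
    (hNY : IndepFun N (fun ω r => (Y r ω, Y' r ω)) P)
    (hYY' : ∀ r r', r ≠ r' → IndepFun (Y r) (Y' r') P) (hdisj : ∀ r, Y r * Y' r =ᵐ[P] 0)
    {a b : ℝ} (ha : ∀ r, ∫ ω, Y r ω ∂P = a) (hb : ∀ r, ∫ ω, Y' r ω ∂P = b) :
    ∫ ω, (∑ r ∈ range (N ω), Y r ω) * (∑ r ∈ range (N ω), Y' r ω) ∂P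
      = (∫ ω, (N ω : ℝ) ^ 2 ∂P - ∫ ω, (N ω : ℝ) ∂P) * (a * b) := by
  have hYint : ∀ r, Integrable (Y r) P := fun r =>
    .of_bound (hY r).aestronglyMeasurable 1 (ae_of_all _ fun ω => hY1 r ω)
  have hY'int : ∀ r, Integrable (Y' r) P := fun r =>
    .of_bound (hY' r).aestronglyMeasurable 1 (ae_of_all _ fun ω => hY'1 r ω)
  rw [hNY.integral_comp_eq_integral_integral
    (g := fun n y => (∑ r ∈ range n, (y r).1) * ∑ r ∈ range n, (y r).2) hN.aemeasurable
    (measurable_pi_lambda _ fun r => (hY r).prodMk (hY' r)).aemeasurable ?_ ?_]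
  · simp_rw [integral_sum_range_mul_sum_range hYint hY'int hYY' hdisj ha hb]
    rw [integral_mul_const, integral_sub hN2.integrable_sq (hN2.integrable one_le_two)]
  · exact (measurable_sum_range measurable_fst fun r => by fun_prop).mul
      (measurable_sum_range measurable_fst fun r => by fun_prop)
  · exact (memLp_sum_range_of_abs_le_one hN hN2 hY hY1).integrable_mul
      (memLp_sum_range_of_abs_le_one hN hN2 hY' hY'1)

lemma covariance_sum_range_sum_range_of_indepFun [IsProbabilityMeasure P]
    {N : Ω → ℕ} {Y Y' : ℕ → Ω → ℝ}
    (hN : Measurable N) (hN2 : MemLp (fun ω => (N ω : ℝ)) 2 P)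
    (hY : ∀ r, Measurable (Y r)) (hY' : ∀ r, Measurable (Y' r))
    (hY1 : ∀ r ω, |Y r ω| ≤ 1) (hY'1 : ∀ r ω, |Y' r ω| ≤ 1)
    (hNY : IndepFun N (fun ω r => (Y r ω, Y' r ω)) P)
    (hYY' : ∀ r r', r ≠ r' → IndepFun (Y r) (Y' r') P) (hdisj : ∀ r, Y r * Y' r =ᵐ[P] 0)
    {a b : ℝ} (ha : ∀ r, ∫ ω, Y r ω ∂P = a) (hb : ∀ r, ∫ ω, Y' r ω ∂P = b) :
    cov[fun ω => ∑ r ∈ range (N ω), Y r ω, fun ω => ∑ r ∈ range (N ω), Y' r ω; P]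
      = (Var[fun ω => (N ω : ℝ); P] - ∫ ω, (N ω : ℝ) ∂P) * (a * b) := by
  have hNint := hN2.integrable one_le_two
  have hNY₁ : IndepFun N (fun ω r => Y r ω) P :=
    hNY.comp measurable_id
      (measurable_pi_lambda (fun (y : ℕ → ℝ × ℝ) r => (y r).1) fun r => by fun_prop)
  have hNY₂ : IndepFun N (fun ω r => Y' r ω) P :=
    hNY.comp measurable_id
      (measurable_pi_lambda (fun (y : ℕ → ℝ × ℝ) r => (y r).2) fun r => by fun_prop)
  rw [covariance_eq_sub (memLp_sum_range_of_abs_le_one hN hN2 hY hY1)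
      (memLp_sum_range_of_abs_le_one hN hN2 hY' hY'1), variance_eq_sub hN2]
  simp only [Pi.mul_apply, Pi.pow_apply]
  rw [integral_sum_range_mul_sum_range_of_indepFun hN hN2 hY hY' hY1 hY'1 hNY hYY' hdisj ha hb,
    integral_sum_range_of_indepFun hN hNint hY hY1 hNY₁ ha,
    integral_sum_range_of_indepFun hN hNint hY' hY'1 hNY₂ hb]
  ring

lemma ae_mul_eq_zero_of_multinomial [IsProbabilityMeasure P] {ι : Type*} [Countable ι]
    [DecidableEq ι] {V : Ω → ι → ℕ} (hV : Measurable V) {G : Finset ι} {β : ι → ℝ}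
    (hβ : ∀ d ∈ G, 0 ≤ β d) (hβsum : ∑ d ∈ G, β d ≤ 1)
    (hsingle : ∀ d ∈ G, P {ω | V ω = fun i => if i = d then 1 else 0} = ENNReal.ofReal (β d))
    (hzero : P {ω | V ω = 0} = ENNReal.ofReal (1 - ∑ d ∈ G, β d)) {c c' : ι} (hcc' : c ≠ c') :
    ∀ᵐ ω ∂P, V ω c * V ω c' = 0 := by
  classical
  set F : Finset (ι → ℕ) := insert 0 (G.image fun d i => if i = d then 1 else 0)
  have hF : P (V ⁻¹' F) = 1 := by
    rw [← sum_measure_preimage_singleton F fun _ _ => hV (measurableSet_singleton _),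
      sum_insert (by simp [funext_iff]),
      sum_image fun d _ d' _ h => by simpa using congrFun h d]
    simp only [Set.preimage, Set.mem_singleton_iff]
    rw [hzero, sum_congr rfl hsingle, ← ENNReal.ofReal_sum_of_nonneg hβ,
      ← ENNReal.ofReal_add (sub_nonneg.2 hβsum) (sum_nonneg hβ), sub_add_cancel,
      ENNReal.ofReal_one]
  have hae : ∀ᵐ ω ∂P, V ω ∈ F :=
    (ae_mem_iff_measure_eq (hV F.measurableSet).nullMeasurableSet).2 (by rw [hF, measure_univ])
  filter_upwards [hae] with ω hω
  rcases mem_insert.1 hω with h | h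
  · simp [h]
  · obtain ⟨d, -, hd⟩ := mem_image.1 h
    rw [← hd]
    grind

section Thinning

variable {κ : Type*}

/-- The paper's `β_{ij} ∘ ε_p` is `thinning (ε p) (Z p) (i, j)`. -/
def thinning (N : Ω → ℕ) (W : ℕ → Ω → κ → ℕ) (c : κ) (ω : Ω) : ℝ :=
  ∑ r ∈ range (N ω), (W r ω c : ℝ)

lemma memLp_thinning {p : ENNReal} {N : Ω → ℕ} {W : ℕ → Ω → κ → ℕ} {c : κ} (hN : Measurable N)
    (hNp : MemLp (fun ω => (N ω : ℝ)) p P) (hW : ∀ r, Measurable (W r))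
    (hW1 : ∀ r ω, W r ω c ≤ 1) : MemLp (thinning N W c) p P :=
  memLp_sum_range_of_abs_le_one hN hNp (fun r => by fun_prop) fun r ω => by
    rw [Nat.abs_cast]; exact_mod_cast hW1 r ω

lemma covariance_thinning_eq_zero_of_ne [IsProbabilityMeasure P] {ι : Type*}
    {ε : ι → Ω → ℕ} {Z : ι → ℕ → Ω → κ → ℕ} (hε : ∀ p, Measurable (ε p))
    (hZ : ∀ p r, Measurable (Z p r)) (hεiid : iIndepFun ε P)
    (hZiid : iIndepFun (fun pr : ι × ℕ => Z pr.1 pr.2) P)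
    (hεZ : IndepFun (fun ω p => ε p ω) (fun ω (pr : ι × ℕ) => Z pr.1 pr.2 ω) P)
    {p p' : ι} (hpp' : p ≠ p') {c c' : κ} (hc : MemLp (thinning (ε p) (Z p) c) 2 P)
    (hc' : MemLp (thinning (ε p') (Z p') c') 2 P) :
    cov[thinning (ε p) (Z p) c, thinning (ε p') (Z p') c'; P] = 0 := by
  have hg : ∀ d, Measurable fun x : ℕ × (ℕ → κ → ℕ) => ∑ r ∈ range x.1, (x.2 r d : ℝ) :=
    fun d => measurable_sum_range measurable_fst fun r => by fun_prop
  exact ((indepFun_block_of_ne hε (fun j => hZ j.1 j.2) hεiid hZiid hεZ hpp').comp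
    (hg c) (hg c')).covariance_eq_zero hc hc'

lemma covariance_thinning_of_ae_mul_eq_zero [IsProbabilityMeasure P] {ι : Type*}
    {ε : ι → Ω → ℕ} {Z : ι → ℕ → Ω → κ → ℕ} {p : ι} (hε : Measurable (ε p))
    (hε2 : MemLp (fun ω => (ε p ω : ℝ)) 2 P) (hZ : ∀ r, Measurable (Z p r))
    (hZ1 : ∀ r ω d, Z p r ω d ≤ 1) (hZiid : iIndepFun (fun pr : ι × ℕ => Z pr.1 pr.2) P)
    (hεZ : IndepFun (fun ω p => ε p ω) (fun ω (pr : ι × ℕ) => Z pr.1 pr.2 ω) P) {c c' : κ}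
    (hdisj : ∀ r, ∀ᵐ ω ∂P, Z p r ω c * Z p r ω c' = 0) {a b : ℝ}
    (ha : ∀ r, ∫ ω, (Z p r ω c : ℝ) ∂P = a) (hb : ∀ r, ∫ ω, (Z p r ω c' : ℝ) ∂P = b) :
    cov[thinning (ε p) (Z p) c, thinning (ε p) (Z p) c'; P]
      = (Var[fun ω => (ε p ω : ℝ); P] - ∫ ω, (ε p ω : ℝ) ∂P) * (a * b) := by
  have hcast : ∀ d, Measurable fun w : κ → ℕ => (w d : ℝ) := fun d => by fun_prop
  refine covariance_sum_range_sum_range_of_indepFun (Y := fun r ω => (Z p r ω c : ℝ))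
    (Y' := fun r ω => (Z p r ω c' : ℝ)) hε hε2 (fun r => (hcast c).comp (hZ r))
    (fun r => (hcast c').comp (hZ r)) (fun r ω => ?_) (fun r ω => ?_)
    (hεZ.comp (measurable_pi_apply p) (measurable_pi_lambda
      (fun (z : ι × ℕ → κ → ℕ) r => ((z (p, r) c : ℝ), (z (p, r) c' : ℝ)))
      fun r => by fun_prop))
    (fun r r' h => (hZiid.indepFun (i := (p, r)) (j := (p, r')) (by simpa using h)).comp
      (hcast c) (hcast c'))
    (fun r => (hdisj r).mono fun ω h => by simpa using h) ha hb
  all_goals rw [Nat.abs_cast]; exact_mod_cast hZ1 r ω _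

end Thinning

end ProbabilityTheory

theorem inma_spread_model_acvf_general
    {Ω : Type*} [MeasurableSpace Ω] (P : Measure Ω) [IsProbabilityMeasure P]
    (q1 q2 : ℕ)
    (β : ℕ → ℕ → ℝ)
    (hβ : ∀ i ≤ q1, ∀ j ≤ q2, β i j ∈ Set.Icc (0 : ℝ) 1)
    -- the i.i.d. innovations, with finite mean and variance
    (ε : ℤ × ℤ → Ω → ℕ) (hεmeas : ∀ p, Measurable (ε p))
    (hεiid : iIndepFun ε P)
    (hεid : ∀ p, Measure.map (ε p) P = Measure.map (ε (0, 0)) P)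
    (hεL2 : Integrable (fun ω => ((ε (0, 0) ω : ℝ)) ^ 2) P)
    (με : ℝ) (hμε : με = ∫ ω, (ε (0, 0) ω : ℝ) ∂P)
    (σε2 : ℝ) (hσε2 : σε2 = variance (fun ω => (ε (0, 0) ω : ℝ)) P)
    -- the counting-series vectors, i.i.d., with {0,1}-valued components
    (Z : ℤ × ℤ → ℕ → Ω → ℕ × ℕ → ℕ)
    (hZmeas : ∀ p r, Measurable (Z p r))
    (hZ01 : ∀ p r ω ij, Z p r ω ij ≤ 1)
    (hZiid : iIndepFun
      (fun pr : (ℤ × ℤ) × ℕ => Z pr.1 pr.2) P)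
    (hZβ : ∀ p r, ∀ i ≤ q1, ∀ j ≤ q2,
      P {ω | Z p r ω (i, j) = 1} = ENNReal.ofReal (β i j))
    -- the whole thinning family is independent of the innovation family
    (hindep : IndepFun (fun ω p => ε p ω)
      (fun ω (pr : (ℤ × ℤ) × ℕ) => Z pr.1 pr.2 ω) P)
    -- the INMA(q1,q2) random field
    (X : ℤ → ℤ → Ω → ℕ)
    (hX : ∀ s t ω, X s t ω =
      ∑ i ∈ range (q1 + 1), ∑ j ∈ range (q2 + 1),
        ∑ r ∈ range (ε (s - (i : ℤ), t - (j : ℤ)) ω),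
          Z (s - (i : ℤ), t - (j : ℤ)) r ω (i, j))
    -- spread model: each Z_{s,t;r} is MULT(1; β_00, …, β_{q1 q2}) distributed
    (hβsum : (∑ i ∈ range (q1 + 1), ∑ j ∈ range (q2 + 1), β i j) ≤ 1)
    (hmult1 : ∀ p r, ∀ i ≤ q1, ∀ j ≤ q2,
      P {ω | Z p r ω = fun ij => if ij = (i, j) then 1 else 0} = ENNReal.ofReal (β i j))
    (hmult0 : ∀ p r, P {ω | Z p r ω = fun _ => 0} =
      ENNReal.ofReal (1 - ∑ i ∈ range (q1 + 1), ∑ j ∈ range (q2 + 1), β i j))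
    (s t : ℤ) (k l : ℕ) (hkl : (k, l) ≠ (0, 0)) :
    (∫ ω, (X s t ω : ℝ) * (X (s - (k : ℤ)) (t - (l : ℤ)) ω : ℝ) ∂P)
      - (∫ ω, (X s t ω : ℝ) ∂P) * (∫ ω, (X (s - (k : ℤ)) (t - (l : ℤ)) ω : ℝ) ∂P) =
      (σε2 - με) * ∑ i ∈ Icc k q1, ∑ j ∈ Icc l q2, β i j * β (i - k) (j - l) := by
  set G := range (q1 + 1) ×ˢ range (q2 + 1)
  have hGmem : ∀ c ∈ G, c.1 ≤ q1 ∧ c.2 ≤ q2 := by simp [G]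
  have hβG : ∀ c ∈ G, 0 ≤ β c.1 c.2 := fun c hc => (hβ _ (hGmem c hc).1 _ (hGmem c hc).2).1
  let U : ℤ × ℤ → ℕ × ℕ → Ω → ℝ := fun p => thinning (ε p) (Z p)
  have hεlaw : ∀ p, IdentDistrib (fun ω => (ε p ω : ℝ)) (fun ω => (ε (0, 0) ω : ℝ)) P P :=
    fun p => IdentDistrib.comp ⟨(hεmeas p).aemeasurable, (hεmeas _).aemeasurable, hεid p⟩
      measurable_from_top
  have hε2 : ∀ p, MemLp (fun ω => (ε p ω : ℝ)) 2 P := fun p =>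
    (hεlaw p).memLp_iff.2 ((memLp_two_iff_integrable_sq (by fun_prop)).2 hεL2)
  have hU2 : ∀ p c, MemLp (U p c) 2 P := fun p c =>
    memLp_thinning (hεmeas p) (hε2 p) (hZmeas p) (hZ01 p · · c)
  have hZmean : ∀ p r, ∀ c ∈ G, ∫ ω, (Z p r ω c : ℝ) ∂P = β c.1 c.2 := fun p r c hc => by
    rw [integral_natCast_eq_measureReal_of_le_one (by fun_prop) (hZ01 p r · c),
      measureReal_def, hZβ p r _ (hGmem c hc).1 _ (hGmem c hc).2,
      ENNReal.toReal_ofReal (hβG c hc)]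
  have hZdisj : ∀ p r {c c' : ℕ × ℕ}, c ≠ c' → ∀ᵐ ω ∂P, Z p r ω c * Z p r ω c' = 0 :=
    fun p r _ _ => ae_mul_eq_zero_of_multinomial (hZmeas p r) hβG (by rwa [sum_product])
      (fun d hd => hmult1 p r _ (hGmem d hd).1 _ (hGmem d hd).2)
      (by rw [sum_product]; exact hmult0 p r)
  have hcov : ∀ c ∈ G, ∀ c' ∈ G,
      cov[U (s - c.1, t - c.2) c, U (s - k - c'.1, t - l - c'.2) c'; P]
        = if c = (k, l) + c' then (σε2 - με) * (β c.1 c.2 * β c'.1 c'.2) else 0 := by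
    intro c hc c' hc'
    split_ifs with hshift
    · have hne : c ≠ c' := by rintro rfl; exact hkl (by simpa using hshift)
      rw [(mk_sub_natCast_eq_iff s t k l c c').2 hshift,
        covariance_thinning_of_ae_mul_eq_zero (hεmeas _) (hε2 _) (hZmeas _) (hZ01 _) hZiid hindep
          (fun r => hZdisj _ r hne) (hZmean _ · c hc) (hZmean _ · c' hc'),
        (hεlaw _).variance_eq, (hεlaw _).integral_eq, ← hσε2, ← hμε]
    · exact covariance_thinning_eq_zero_of_ne hεmeas hZmeas hεiid hZiid hindep
        (mt (mk_sub_natCast_eq_iff s t k l c c').1 hshift) (hU2 _ c) (hU2 _ c')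
  have hXU : ∀ s t : ℤ,
      (fun ω => (X s t ω : ℝ)) = fun ω => ∑ c ∈ G, U (s - c.1, t - c.2) c ω :=
    fun s t => funext fun ω => by simp [hX, G, U, thinning, sum_product]
  have hX2 : ∀ s t, MemLp (fun ω => (X s t ω : ℝ)) 2 P := fun s t =>
    hXU s t ▸ memLp_finsetSum _ fun c _ => hU2 _ c
  calc _ = cov[fun ω => (X s t ω : ℝ), fun ω => (X (s - k) (t - l) ω : ℝ); P] :=
        (covariance_eq_sub (hX2 _ _) (hX2 _ _)).symm
    _ = ∑ c ∈ G, ∑ c' ∈ G,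
          cov[U (s - c.1, t - c.2) c, U (s - k - c'.1, t - l - c'.2) c'; P] := by
        rw [hXU, hXU, covariance_fun_sum_fun_sum' (fun c _ => hU2 _ c) (fun c _ => hU2 _ c)]
    _ = _ := by
        rw [sum_congr rfl fun c hc => sum_congr rfl fun c' hc' => hcov c hc c' hc',
          sum_product_range_sum_ite_eq_add, mul_sum]
        simp_rw [mul_sum]

/-- Spread model: the ACvF equals `(σ_ε² - μ_ε) ∑∑ β_{ij} β_{i-k,j-l}` for (k,l) ≠ (0,0). -/
theorem inma_spread_model_acvf
    {Ω : Type*} [MeasurableSpace Ω] (P : Measure Ω) [IsProbabilityMeasure P]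
    (q1 q2 : ℕ) (hq : 1 ≤ q1 + q2)
    (β : ℕ → ℕ → ℝ)
    (hβ : ∀ i ≤ q1, ∀ j ≤ q2, β i j ∈ Set.Icc (0 : ℝ) 1)
    -- the i.i.d. innovations, with finite mean and variance
    (ε : ℤ × ℤ → Ω → ℕ) (hεmeas : ∀ p, Measurable (ε p))
    (hεiid : iIndepFun ε P)
    (hεid : ∀ p, Measure.map (ε p) P = Measure.map (ε (0, 0)) P)
    (hεL2 : Integrable (fun ω => ((ε (0, 0) ω : ℝ)) ^ 2) P)
    (με : ℝ) (hμε : με = ∫ ω, (ε (0, 0) ω : ℝ) ∂P)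
    (σε2 : ℝ) (hσε2 : σε2 = variance (fun ω => (ε (0, 0) ω : ℝ)) P)
    -- the counting-series vectors, i.i.d., with {0,1}-valued components
    (Z : ℤ × ℤ → ℕ → Ω → ℕ × ℕ → ℕ)
    (hZmeas : ∀ p r, Measurable (Z p r))
    (hZ01 : ∀ p r ω ij, Z p r ω ij ≤ 1)
    (hZiid : iIndepFun
      (fun pr : (ℤ × ℤ) × ℕ => Z pr.1 pr.2) P)
    (hZid : ∀ p r, Measure.map (Z p r) P = Measure.map (Z (0, 0) 0) P)
    (hZβ : ∀ p r, ∀ i ≤ q1, ∀ j ≤ q2,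
      P {ω | Z p r ω (i, j) = 1} = ENNReal.ofReal (β i j))
    -- the whole thinning family is independent of the innovation family
    (hindep : IndepFun (fun ω p => ε p ω)
      (fun ω (pr : (ℤ × ℤ) × ℕ) => Z pr.1 pr.2 ω) P)
    -- the INMA(q1,q2) random field
    (X : ℤ → ℤ → Ω → ℕ)
    (hX : ∀ s t ω, X s t ω =
      ∑ i ∈ range (q1 + 1), ∑ j ∈ range (q2 + 1),
        ∑ r ∈ range (ε (s - (i : ℤ), t - (j : ℤ)) ω),
          Z (s - (i : ℤ), t - (j : ℤ)) r ω (i, j))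
    -- spread model: each Z_{s,t;r} is MULT(1; β_00, …, β_{q1 q2}) distributed
    (hβsum : (∑ i ∈ range (q1 + 1), ∑ j ∈ range (q2 + 1), β i j) ≤ 1)
    (hmult1 : ∀ p r, ∀ i ≤ q1, ∀ j ≤ q2,
      P {ω | Z p r ω = fun ij => if ij = (i, j) then 1 else 0} = ENNReal.ofReal (β i j))
    (hmult0 : ∀ p r, P {ω | Z p r ω = fun _ => 0} =
      ENNReal.ofReal (1 - ∑ i ∈ range (q1 + 1), ∑ j ∈ range (q2 + 1), β i j))
    (s t : ℤ) (k l : ℕ) (hk : k ≤ q1) (hl : l ≤ q2) (hkl : (k, l) ≠ (0, 0)) :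
    (∫ ω, (X s t ω : ℝ) * (X (s - (k : ℤ)) (t - (l : ℤ)) ω : ℝ) ∂P)
      - (∫ ω, (X s t ω : ℝ) ∂P) * (∫ ω, (X (s - (k : ℤ)) (t - (l : ℤ)) ω : ℝ) ∂P) =
      (σε2 - με) * ∑ i ∈ Icc k q1, ∑ j ∈ Icc l q2, β i j * β (i - k) (j - l) :=
  inma_spread_model_acvf_general P q1 q2 β hβ ε hεmeas hεiid hεid hεL2 με hμε σε2 hσε2 Z hZmeas hZ01
    hZiid hZβ hindep X hX hβsum hmult1 hmult0 s t k l hkl
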